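/- arXiv:2510.05409 — 2 statements merged into one kernel-verified Lean document; each statement's English description precedes it below -/
import Mathlib

section
/- Let α ∈ ℝⁿ and δ ≥ 1. Suppose that for every C > 0 there exists a nonzero ξ ∈ ℤⁿ with 0 < |⟨ξ,α⟩| < C|ξ|^{-(δ-1)}. Then there is no constant c > 0 such that ‖∇f‖_{L²(𝕋ⁿ)}^{δ-1}·‖⟨∇f,α⟩‖_{L²(𝕋ⁿ)} ≥ c‖f‖_{L²(𝕋ⁿ)}^δ holds for all f ∈ H¹(𝕋ⁿ) with mean value zero. -/
/-! A function with a single Fourier mode `ξ` has `‖f‖ = 1`, `‖∇f‖ = |ξ|` and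
`‖⟨∇f, α⟩‖ = |⟨ξ, α⟩|`, so the inequality would force `|ξ|^{δ-1} |⟨ξ, α⟩| ≥ c`;
the hypothesis provides a `ξ` violating this for `C = c`. -/

/-- Euclidean norm of a frequency `ξ ∈ ℤⁿ`. -/
noncomputable def znorm {n : ℕ} (ξ : Fin n → ℤ) : ℝ :=
  Real.sqrt (∑ j, ((ξ j : ℝ)) ^ 2)

/-- `L²(𝕋ⁿ)` norm of `f` in terms of its Fourier coefficients (Plancherel). -/
noncomputable def L2norm {n : ℕ} (a : (Fin n → ℤ) → ℂ) : ℝ :=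
  Real.sqrt (∑' ξ, ‖a ξ‖ ^ 2)

/-- `L²(𝕋ⁿ)` norm of `∇f` in terms of the Fourier coefficients of `f`. -/
noncomputable def gradL2norm {n : ℕ} (a : (Fin n → ℤ) → ℂ) : ℝ :=
  Real.sqrt (∑' ξ, znorm ξ ^ 2 * ‖a ξ‖ ^ 2)

/-- `L²(𝕋ⁿ)` norm of the directional derivative `⟨∇f, α⟩` in terms of the
Fourier coefficients of `f`. -/
noncomputable def dirL2norm {n : ℕ} (α : Fin n → ℝ) (a : (Fin n → ℤ) → ℂ) : ℝ :=
  Real.sqrt (∑' ξ, (∑ j, (ξ j : ℝ) * α j) ^ 2 * ‖a ξ‖ ^ 2)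

/-- Membership in `H¹(𝕋ⁿ)`, via Fourier coefficients. -/
def memH1 {n : ℕ} (a : (Fin n → ℤ) → ℂ) : Prop :=
  Summable fun ξ => (1 + znorm ξ ^ 2) * ‖a ξ‖ ^ 2

open Finset

theorem znorm_pos {n : ℕ} {ξ : Fin n → ℤ} (hξ : ξ ≠ 0) : 0 < znorm ξ := by
  obtain ⟨j, hj⟩ := Function.ne_iff.mp hξ
  refine Real.sqrt_pos.mpr (sum_pos' (fun i _ => sq_nonneg _) ⟨j, mem_univ j, ?_⟩)
  have : (ξ j : ℝ) ≠ 0 := by exact_mod_cast hj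
  positivity

theorem tsum_mul_norm_single_one_sq {n : ℕ} (w : (Fin n → ℤ) → ℝ) (ξ : Fin n → ℤ) :
    ∑' η, w η * ‖(Pi.single ξ 1 : (Fin n → ℤ) → ℂ) η‖ ^ 2 = w ξ := by
  rw [tsum_eq_single ξ fun η hη => by simp [Pi.single_eq_of_ne hη]]
  simp

theorem L2norm_single_one {n : ℕ} (ξ : Fin n → ℤ) : L2norm (Pi.single ξ (1 : ℂ)) = 1 := by
  simpa [L2norm] using congrArg Real.sqrt (tsum_mul_norm_single_one_sq (fun _ => 1) ξ)

theorem gradL2norm_single_one {n : ℕ} (ξ : Fin n → ℤ) :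
    gradL2norm (Pi.single ξ (1 : ℂ)) = znorm ξ := by
  rw [gradL2norm, tsum_mul_norm_single_one_sq]
  exact Real.sqrt_sq (Real.sqrt_nonneg _)

theorem dirL2norm_single_one {n : ℕ} (α : Fin n → ℝ) (ξ : Fin n → ℤ) :
    dirL2norm α (Pi.single ξ (1 : ℂ)) = |∑ j, (ξ j : ℝ) * α j| := by
  rw [dirL2norm, tsum_mul_norm_single_one_sq, Real.sqrt_sq_eq_abs]

theorem memH1_single {n : ℕ} (ξ : Fin n → ℤ) (z : ℂ) : memH1 (Pi.single ξ z) :=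
  summable_of_ne_finset_zero (s := {ξ}) fun η hη => by
    simp [Pi.single_eq_of_ne (Finset.notMem_singleton.mp hη)]

theorem stmt5_general {n : ℕ} (α : Fin n → ℝ) (δ : ℝ)
    (h : ∀ C > (0 : ℝ), ∃ ξ : Fin n → ℤ, ξ ≠ 0 ∧
      0 < |∑ j, (ξ j : ℝ) * α j| ∧
      |∑ j, (ξ j : ℝ) * α j| < C * znorm ξ ^ (-(δ - 1))) :
    ¬ ∃ c > 0, ∀ a : (Fin n → ℤ) → ℂ, memH1 a → a 0 = 0 →
      gradL2norm a ^ (δ - 1) * dirL2norm α a ≥ c * L2norm a ^ δ := by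
  rintro ⟨c, hc, hineq⟩
  obtain ⟨ξ, hξ, -, hsmall⟩ := h c hc
  have hpos := znorm_pos hξ
  have hlarge := hineq (Pi.single ξ 1) (memH1_single ξ 1) (Pi.single_eq_of_ne' hξ 1)
  rw [L2norm_single_one, gradL2norm_single_one, dirL2norm_single_one, Real.one_rpow,
    mul_one] at hlarge
  have hsmall' : znorm ξ ^ (δ - 1) * |∑ j, (ξ j : ℝ) * α j| < c := by
    calc znorm ξ ^ (δ - 1) * |∑ j, (ξ j : ℝ) * α j|
        < znorm ξ ^ (δ - 1) * (c * znorm ξ ^ (-(δ - 1))) :=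
          mul_lt_mul_of_pos_left hsmall (Real.rpow_pos_of_pos hpos _)
      _ = c := by rw [mul_left_comm, ← Real.rpow_add hpos, add_neg_cancel, Real.rpow_zero,
          mul_one]
  linarith

theorem stmt5 {n : ℕ} (α : Fin n → ℝ) (δ : ℝ) (hδ : 1 ≤ δ)
    (h : ∀ C > (0 : ℝ), ∃ ξ : Fin n → ℤ, ξ ≠ 0 ∧
      0 < |∑ j, (ξ j : ℝ) * α j| ∧
      |∑ j, (ξ j : ℝ) * α j| < C * znorm ξ ^ (-(δ - 1))) :
    ¬ ∃ c > 0, ∀ a : (Fin n → ℤ) → ℂ, memH1 a → a 0 = 0 →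
      gradL2norm a ^ (δ - 1) * dirL2norm α a ≥ c * L2norm a ^ δ :=
  stmt5_general α δ h
end

section
/- Let α = (α₁, α₂) ∈ ℝ² with α₁α₂ ≠ 0 and α₂/α₁ irrational algebraic of degree 2. Then there exists c > 0 with ‖∇f‖_{L²(𝕋²)}·‖α₁∂_x f + α₂∂_y f‖_{L²(𝕋²)} ≥ c‖f‖_{L²(𝕋²)}² for all mean-zero f ∈ H¹(𝕋²) (i.e. the directional Poincaré inequality holds with δ = 2). -/
/-!
In Fourier variables, Cauchy–Schwarz reduces the inequality to the pointwise bound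
`c ≤ |ξ| |α₁ ξ₁ + α₂ ξ₂|` on `ℤ² \ {0}`. Since `α₁ ξ₁ + α₂ ξ₂ = α₁ (ξ₁ + β ξ₂)` with `β = α₂/α₁`,
for `ξ₂ ≠ 0` this is Liouville's bound `|β - p/q| ≥ C/q²` for the quadratic irrational `β`,
at `p = -ξ₁`, `q = ξ₂`.
-/

open Polynomial

/-- Euclidean norm of a frequency `ξ ∈ ℤ²`. -/
noncomputable def znorm2 (ξ : ℤ × ℤ) : ℝ :=
  Real.sqrt ((ξ.1 : ℝ) ^ 2 + (ξ.2 : ℝ) ^ 2)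

/-- `L²(𝕋²)` norm of `f` in terms of its Fourier coefficients (Plancherel). -/
noncomputable def L2norm2 (a : ℤ × ℤ → ℂ) : ℝ :=
  Real.sqrt (∑' ξ, ‖a ξ‖ ^ 2)

/-- `L²(𝕋²)` norm of `∇f` in terms of the Fourier coefficients of `f`. -/
noncomputable def gradL2norm2 (a : ℤ × ℤ → ℂ) : ℝ :=
  Real.sqrt (∑' ξ, znorm2 ξ ^ 2 * ‖a ξ‖ ^ 2)

/-- `L²(𝕋²)` norm of `α₁ ∂ₓ f + α₂ ∂_y f` in terms of the Fourier
coefficients of `f`. -/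
noncomputable def dirL2norm2 (α₁ α₂ : ℝ) (a : ℤ × ℤ → ℂ) : ℝ :=
  Real.sqrt (∑' ξ, (α₁ * (ξ.1 : ℝ) + α₂ * (ξ.2 : ℝ)) ^ 2 * ‖a ξ‖ ^ 2)

/-- Membership in `H¹(𝕋²)`, via Fourier coefficients. -/
def memH12 (a : ℤ × ℤ → ℂ) : Prop :=
  Summable fun ξ => (1 + znorm2 ξ ^ 2) * ‖a ξ‖ ^ 2

theorem Polynomial.exists_int_natDegree_le_aeval_eq_zero {A : Type*} [CommRing A] [Algebra ℚ A]
    {P : ℚ[X]} (hP : P ≠ 0) {β : A} (hβ : aeval β P = 0) :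
    ∃ f : ℤ[X], f ≠ 0 ∧ f.natDegree ≤ P.natDegree ∧ aeval β f = 0 :=
  ⟨IsLocalization.integerNormalization (nonZeroDivisors ℤ) P,
    fun h => hP (IsFractionRing.integerNormalization_eq_zero_iff.mp h),
    natDegree_le_natDegree (degree_mono (IsLocalization.integerNormalization_support _ P)),
    IsLocalization.integerNormalization_aeval_eq_zero _ P hβ⟩

theorem Liouville.exists_pos_le_abs_pow_mul_abs_sub {β : ℝ} (hβ : Irrational β) {f : ℤ[X]}
    (hf : f ≠ 0) (hroot : aeval β f = 0) :
    ∃ C > 0, ∀ p q : ℤ, q ≠ 0 → C ≤ |(q : ℝ)| ^ f.natDegree * |β - p / q| := by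
  rw [aeval_def, ← eval_map] at hroot
  obtain ⟨A, hA, hL⟩ := Liouville.exists_pos_real_of_irrational_root hβ hf hroot
  refine ⟨1 / A, by positivity, fun p q hq => ?_⟩
  -- Mathlib's bound is stated for denominators `b + 1 : ℕ`; apply it with `b + 1 = |q|`.
  have hb : ((q.natAbs - 1 : ℕ) : ℝ) + 1 = |(q : ℝ)| := by
    rw [Nat.cast_sub (Int.natAbs_pos.mpr hq), Nat.cast_natAbs, Int.cast_abs]
    ring
  have hsign : ((q.sign * p : ℤ) : ℝ) / |(q : ℝ)| = p / q := by
    rcases hq.lt_or_gt with hneg | hpos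
    · rw [Int.sign_eq_neg_one_of_neg hneg, abs_of_neg (by exact_mod_cast hneg)]
      push_cast
      rw [neg_one_mul, neg_div_neg_eq]
    · rw [Int.sign_eq_one_of_pos hpos, abs_of_pos (by exact_mod_cast hpos), one_mul]
  have h := hL (q.sign * p) (q.natAbs - 1)
  rw [hb, hsign, ← mul_assoc] at h
  rwa [div_le_iff₀ hA]

theorem Irrational.exists_pos_le_abs_pow_mul_abs_sub {β : ℝ} (hβ : Irrational β) {P : ℚ[X]}
    (hP : P ≠ 0) (hroot : aeval β P = 0) :
    ∃ C > 0, ∀ p q : ℤ, q ≠ 0 → C ≤ |(q : ℝ)| ^ P.natDegree * |β - p / q| := by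
  obtain ⟨f, hf, hdeg, hfroot⟩ := exists_int_natDegree_le_aeval_eq_zero hP hroot
  obtain ⟨C, hC, hL⟩ := Liouville.exists_pos_le_abs_pow_mul_abs_sub hβ hf hfroot
  refine ⟨C, hC, fun p q hq => (hL p q hq).trans ?_⟩
  have hq1 : (1 : ℝ) ≤ |(q : ℝ)| := by exact_mod_cast Int.one_le_abs hq
  gcongr

theorem znorm2_nonneg (ξ : ℤ × ℤ) : 0 ≤ znorm2 ξ :=
  Real.sqrt_nonneg _

theorem sq_znorm2 (ξ : ℤ × ℤ) : znorm2 ξ ^ 2 = (ξ.1 : ℝ) ^ 2 + (ξ.2 : ℝ) ^ 2 :=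
  Real.sq_sqrt (by positivity)

theorem abs_fst_le_znorm2 (ξ : ℤ × ℤ) : |(ξ.1 : ℝ)| ≤ znorm2 ξ :=
  Real.abs_le_sqrt (le_add_of_nonneg_right (sq_nonneg _))

theorem abs_snd_le_znorm2 (ξ : ℤ × ℤ) : |(ξ.2 : ℝ)| ≤ znorm2 ξ :=
  Real.abs_le_sqrt (le_add_of_nonneg_left (sq_nonneg _))

theorem sq_add_mul_le_znorm2 (α₁ α₂ : ℝ) (ξ : ℤ × ℤ) :
    (α₁ * ξ.1 + α₂ * ξ.2) ^ 2 ≤ (α₁ ^ 2 + α₂ ^ 2) * znorm2 ξ ^ 2 := by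
  rw [sq_znorm2]
  nlinarith [sq_nonneg (α₁ * ξ.2 - α₂ * ξ.1)]

theorem min_le_znorm2_mul_abs_add_mul {β C : ℝ}
    (hβ : ∀ p q : ℤ, q ≠ 0 → C ≤ |(q : ℝ)| ^ 2 * |β - p / q|) {ξ : ℤ × ℤ} (hξ : ξ ≠ 0) :
    min C 1 ≤ znorm2 ξ * |ξ.1 + β * ξ.2| := by
  rcases eq_or_ne ξ.2 0 with h2 | h2
  · have h1 : (1 : ℝ) ≤ |(ξ.1 : ℝ)| := by
      exact_mod_cast Int.one_le_abs fun h1 => hξ (Prod.ext h1 h2)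
    rw [h2, Int.cast_zero, mul_zero, add_zero]
    calc min C 1 ≤ 1 * 1 := by simp
      _ ≤ znorm2 ξ * |(ξ.1 : ℝ)| :=
        mul_le_mul (h1.trans (abs_fst_le_znorm2 ξ)) h1 zero_le_one (znorm2_nonneg ξ)
  · have h2R : (ξ.2 : ℝ) ≠ 0 := by exact_mod_cast h2
    have hlin : |ξ.1 + β * ξ.2| = |(ξ.2 : ℝ)| * |β - ((-ξ.1 : ℤ) : ℝ) / ξ.2| := by
      rw [← abs_mul]
      congr 1
      field_simp
      push_cast
      ring
    calc min C 1 ≤ |(ξ.2 : ℝ)| ^ 2 * |β - ((-ξ.1 : ℤ) : ℝ) / ξ.2| :=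
          (min_le_left _ _).trans (hβ _ _ h2)
      _ ≤ znorm2 ξ * |ξ.1 + β * ξ.2| := by
        rw [hlin, sq, mul_assoc]
        gcongr
        exact abs_snd_le_znorm2 ξ

theorem Real.tsum_mul_le_sqrt_mul_sqrt {ι : Type*} {f g : ι → ℝ} (hf : ∀ i, 0 ≤ f i)
    (hg : ∀ i, 0 ≤ g i) (hf2 : Summable fun i => f i ^ 2) (hg2 : Summable fun i => g i ^ 2) :
    (Summable fun i => f i * g i) ∧
      ∑' i, f i * g i ≤ √(∑' i, f i ^ 2) * √(∑' i, g i ^ 2) := by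
  simp only [← Real.rpow_two, Real.sqrt_eq_rpow] at hf2 hg2 ⊢
  exact Real.summable_and_inner_le_Lp_mul_Lq_tsum_of_nonneg .two_two hf hg hf2 hg2

theorem mul_tsum_sq_le_sqrt_mul_sqrt {ι : Type*} {c : ℝ} {w v x : ι → ℝ}
    (hwv : ∀ i, x i ≠ 0 → c ≤ |w i * v i|) (hx : Summable fun i => x i ^ 2)
    (hw : Summable fun i => w i ^ 2 * x i ^ 2) (hv : Summable fun i => v i ^ 2 * x i ^ 2) :
    c * ∑' i, x i ^ 2 ≤ √(∑' i, w i ^ 2 * x i ^ 2) * √(∑' i, v i ^ 2 * x i ^ 2) := by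
  have hsq : ∀ (u : ι → ℝ) i, |u i * x i| ^ 2 = u i ^ 2 * x i ^ 2 := fun u i => by
    rw [sq_abs, mul_pow]
  obtain ⟨hsum, hCS⟩ := Real.tsum_mul_le_sqrt_mul_sqrt (f := fun i => |w i * x i|)
    (g := fun i => |v i * x i|) (fun _ => abs_nonneg _) (fun _ => abs_nonneg _)
    (by simpa only [hsq] using hw) (by simpa only [hsq] using hv)
  simp only [hsq] at hCS
  refine le_trans ?_ hCS
  rw [← tsum_mul_left]
  refine (hx.mul_left c).tsum_le_tsum (fun i => ?_) hsum
  rcases eq_or_ne (x i) 0 with h0 | h0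
  · simp [h0]
  · calc c * x i ^ 2 ≤ |w i * v i| * x i ^ 2 := by gcongr; exact hwv i h0
      _ = |w i * x i| * |v i * x i| := by
        simp only [abs_mul]
        rw [← sq_abs (x i)]
        ring

theorem memH12.summable_sq_mul_sq {a : ℤ × ℤ → ℂ} (ha : memH12 a) {w : ℤ × ℤ → ℝ} {K : ℝ}
    (hw : ∀ ξ, w ξ ^ 2 ≤ K * (1 + znorm2 ξ ^ 2)) :
    Summable fun ξ => w ξ ^ 2 * ‖a ξ‖ ^ 2 :=
  (ha.mul_left K).of_nonneg_of_le (fun _ => by positivity) fun ξ => by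
    rw [← mul_assoc]
    gcongr
    exact hw ξ

/-- If `α₂/α₁` is an irrational algebraic number of degree `2`, then the
directional Poincaré inequality on `𝕋²` in direction `α` holds with `δ = 2`. -/
theorem stmt10 (α₁ α₂ : ℝ) (hα : α₁ * α₂ ≠ 0) (hirr : Irrational (α₂ / α₁))
    (halg : ∃ P : Polynomial ℚ, P.degree = 2 ∧ Polynomial.aeval (α₂ / α₁) P = 0) :
    ∃ c > 0, ∀ a : ℤ × ℤ → ℂ, memH12 a → a 0 = 0 →
      gradL2norm2 a * dirL2norm2 α₁ α₂ a ≥ c * L2norm2 a ^ 2 := by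
  have hα₁ : α₁ ≠ 0 := left_ne_zero_of_mul hα
  obtain ⟨P, hdeg, hroot⟩ := halg
  obtain ⟨C, hC, hβ⟩ := hirr.exists_pos_le_abs_pow_mul_abs_sub (by rintro rfl; simp at hdeg)
    hroot
  rw [natDegree_eq_of_degree_eq_some hdeg] at hβ
  have hsymbol : ∀ ξ : ℤ × ℤ, ξ ≠ 0 →
      |α₁| * min C 1 ≤ |znorm2 ξ * (α₁ * ξ.1 + α₂ * ξ.2)| := fun ξ hξ => by
    have hfactor :
        znorm2 ξ * (α₁ * ξ.1 + α₂ * ξ.2) = α₁ * (znorm2 ξ * (ξ.1 + α₂ / α₁ * ξ.2)) := by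
      field_simp
    rw [hfactor, abs_mul, abs_mul, abs_of_nonneg (znorm2_nonneg ξ)]
    gcongr
    exact min_le_znorm2_mul_abs_add_mul hβ hξ
  refine ⟨|α₁| * min C 1, by positivity, fun a ha ha0 => ?_⟩
  rw [L2norm2, Real.sq_sqrt (tsum_nonneg fun _ => sq_nonneg _)]
  exact mul_tsum_sq_le_sqrt_mul_sqrt
    (fun ξ hξ => hsymbol ξ fun h => hξ (by rw [h, ha0, norm_zero]))
    (by simpa using ha.summable_sq_mul_sq (w := 1) (K := 1) fun ξ => by simp [sq_nonneg])
    (ha.summable_sq_mul_sq (K := 1) fun ξ => by linarith)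
    (ha.summable_sq_mul_sq (K := α₁ ^ 2 + α₂ ^ 2) fun ξ =>
      (sq_add_mul_le_znorm2 α₁ α₂ ξ).trans (by gcongr; linarith))
end
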